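/- Let f : [a,b] → ℝ be continuously differentiable and x ∈ [a,b]. Define K(t,x) = t − a for t ∈ [a,x) and K(t,x) = t − b for t ∈ [x,b]. Then | f(x) − (1/(b−a))·∫_a^b f(t) dt − ((f(b)−f(a))/(b−a)²)·((x−a)²/2 − (x−b)²/2) | ≤ [ (1/(b−a))·∫_a^b K(t,x)² dt − ((1/(b−a))·∫_a^b K(t,x) dt)² ]^{1/2} · [ (1/(b−a))·∫_a^b f'(t)² dt − ((f(b)−f(a))/(b−a))² ]^{1/2}. -/

import Mathlib

/-!
Integrating by parts on `[a, x]` and `[x, b]` gives Montgomery's identity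
`∫ K(t, x) f'(t) dt = (b - a) f(x) - ∫ f`, and `∫ f' = f(b) - f(a)`. Hence the left-hand side
is `|T(K, f')|` for the Chebyshev functional `T(g, h) = ⨍ g h - ⨍ g ⨍ h`. Since
`(b - a) T(g, h) = ∫ (g - ⨍ g) (h - ⨍ h)`, the Cauchy–Schwarz inequality for the centred
functions gives `|T(g, h)| ≤ √T(g, g) √T(h, h)`.
-/

open Set intervalIntegral
open MeasureTheory (volume)

section CauchySchwarz

variable {a b : ℝ} {g h : ℝ → ℝ}

theorem sq_integral_mul_le (hab : a ≤ b)
    (hg2 : IntervalIntegrable (fun t => g t ^ 2) volume a b)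
    (hh2 : IntervalIntegrable (fun t => h t ^ 2) volume a b)
    (hgh : IntervalIntegrable (fun t => g t * h t) volume a b) :
    (∫ t in a..b, g t * h t) ^ 2 ≤ (∫ t in a..b, g t ^ 2) * ∫ t in a..b, h t ^ 2 := by
  have hquad : ∀ s : ℝ, 0 ≤ (∫ t in a..b, g t ^ 2) * (s * s)
      + (2 * ∫ t in a..b, g t * h t) * s + ∫ t in a..b, h t ^ 2 := by
    intro s
    have hexpand : ∫ t in a..b, (s * g t + h t) ^ 2 = (∫ t in a..b, g t ^ 2) * (s * s)
        + (2 * ∫ t in a..b, g t * h t) * s + ∫ t in a..b, h t ^ 2 := by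
      have hpoint : (fun t => (s * g t + h t) ^ 2)
          = fun t => (s * s) * g t ^ 2 + (2 * s) * (g t * h t) + h t ^ 2 := by
        funext t; ring
      rw [hpoint, integral_add ((hg2.const_mul _).add (hgh.const_mul _)) hh2,
        integral_add (hg2.const_mul _) (hgh.const_mul _), integral_const_mul,
        integral_const_mul]
      ring
    exact hexpand ▸ integral_nonneg hab fun t _ => sq_nonneg _
  have hdiscrim := discrim_le_zero hquad
  rw [discrim] at hdiscrim
  nlinarith

theorem IntervalIntegrable.sub_mul_sub (hg : IntervalIntegrable g volume a b)
    (hh : IntervalIntegrable h volume a b)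
    (hgh : IntervalIntegrable (fun t => g t * h t) volume a b) (c d : ℝ) :
    IntervalIntegrable (fun t => (g t - c) * (h t - d)) volume a b := by
  have hpoint : (fun t => (g t - c) * (h t - d))
      = fun t => g t * h t - d * g t - c * h t + c * d := by
    funext t; ring
  rw [hpoint]
  exact ((hgh.sub (hg.const_mul _)).sub (hh.const_mul _)).add intervalIntegrable_const

theorem integral_sub_mul_sub (hg : IntervalIntegrable g volume a b)
    (hh : IntervalIntegrable h volume a b)
    (hgh : IntervalIntegrable (fun t => g t * h t) volume a b) (c d : ℝ) :
    ∫ t in a..b, (g t - c) * (h t - d)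
      = (∫ t in a..b, g t * h t) - d * (∫ t in a..b, g t) - c * (∫ t in a..b, h t)
        + (b - a) * (c * d) := by
  have hpoint : (fun t => (g t - c) * (h t - d))
      = fun t => g t * h t - d * g t - c * h t + c * d := by
    funext t; ring
  rw [hpoint, integral_add ((hgh.sub (hg.const_mul _)).sub (hh.const_mul _))
      intervalIntegrable_const, integral_sub (hgh.sub (hg.const_mul _)) (hh.const_mul _),
    integral_sub hgh (hg.const_mul _), integral_const_mul, integral_const_mul,
    integral_const, smul_eq_mul]

theorem integral_sub_mean_mul_sub_mean (hab : a ≠ b) (hg : IntervalIntegrable g volume a b)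
    (hh : IntervalIntegrable h volume a b)
    (hgh : IntervalIntegrable (fun t => g t * h t) volume a b) :
    ∫ t in a..b, (g t - 1 / (b - a) * ∫ s in a..b, g s)
        * (h t - 1 / (b - a) * ∫ s in a..b, h s)
      = (b - a) * (1 / (b - a) * (∫ t in a..b, g t * h t)
          - (1 / (b - a) * ∫ t in a..b, g t) * (1 / (b - a) * ∫ t in a..b, h t)) := by
  have hlen : b - a ≠ 0 := sub_ne_zero.2 hab.symm
  rw [integral_sub_mul_sub hg hh hgh]
  field_simp
  ring

theorem abs_chebyshev_functional_le (hab : a < b) (hg : IntervalIntegrable g volume a b)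
    (hh : IntervalIntegrable h volume a b)
    (hg2 : IntervalIntegrable (fun t => g t ^ 2) volume a b)
    (hh2 : IntervalIntegrable (fun t => h t ^ 2) volume a b)
    (hgh : IntervalIntegrable (fun t => g t * h t) volume a b) :
    |1 / (b - a) * (∫ t in a..b, g t * h t)
        - (1 / (b - a) * ∫ t in a..b, g t) * (1 / (b - a) * ∫ t in a..b, h t)|
      ≤ √(1 / (b - a) * (∫ t in a..b, g t ^ 2) - (1 / (b - a) * ∫ t in a..b, g t) ^ 2)
        * √(1 / (b - a) * (∫ t in a..b, h t ^ 2) - (1 / (b - a) * ∫ t in a..b, h t) ^ 2) := by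
  have hlen : 0 < b - a := sub_pos.2 hab
  simp only [sq] at hg2 hh2 ⊢
  have hcs := sq_integral_mul_le hab.le (g := fun t => g t - 1 / (b - a) * ∫ s in a..b, g s)
    (h := fun t => h t - 1 / (b - a) * ∫ s in a..b, h s)
    (by simpa only [sq] using hg.sub_mul_sub hg hg2 _ _)
    (by simpa only [sq] using hh.sub_mul_sub hh hh2 _ _) (hg.sub_mul_sub hh hgh _ _)
  simp only [sq, integral_sub_mean_mul_sub_mean hab.ne hg hh hgh,
    integral_sub_mean_mul_sub_mean hab.ne hg hg hg2,
    integral_sub_mean_mul_sub_mean hab.ne hh hh hh2, mul_mul_mul_comm (b - a)] at hcs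
  have hvar_nonneg : 0 ≤ 1 / (b - a) * (∫ t in a..b, g t * g t)
      - (1 / (b - a) * ∫ t in a..b, g t) * (1 / (b - a) * ∫ t in a..b, g t) := by
    refine (mul_nonneg_iff_of_pos_left hlen).1 ?_
    rw [← integral_sub_mean_mul_sub_mean hab.ne hg hg hg2]
    exact integral_nonneg hab.le fun t _ => mul_self_nonneg _
  rw [← Real.sqrt_mul hvar_nonneg]
  refine Real.abs_le_sqrt ?_
  rw [sq]
  exact le_of_mul_le_mul_left hcs (mul_pos hlen hlen)

end CauchySchwarz

section Piecewise

variable {u v : ℝ → ℝ} {a b x : ℝ}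

theorem eqOn_ite_lt_left : EqOn (fun t => if t < x then u t else v t) u (Ioo a x) :=
  fun _ ht => if_pos ht.2

theorem eqOn_ite_lt_right : EqOn (fun t => if t < x then u t else v t) v (Ioo x b) :=
  fun _ ht => if_neg (not_lt.2 ht.1.le)

theorem IntervalIntegrable.ite_lt (hx : x ∈ Icc a b) (hu : IntervalIntegrable u volume a b)
    (hv : IntervalIntegrable v volume a b) :
    IntervalIntegrable (fun t => if t < x then u t else v t) volume a b :=
  ((hu.mono_set (uIcc_subset_uIcc_left (Icc_subset_uIcc hx))).congr_uIoo
      (uIoo_of_le hx.1 ▸ eqOn_ite_lt_left.symm)).trans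
    ((hv.mono_set (uIcc_subset_uIcc_right (Icc_subset_uIcc hx))).congr_uIoo
      (uIoo_of_le hx.2 ▸ eqOn_ite_lt_right.symm))

theorem integral_ite_lt (hx : x ∈ Icc a b) (hu : IntervalIntegrable u volume a b)
    (hv : IntervalIntegrable v volume a b) :
    ∫ t in a..b, (if t < x then u t else v t) = (∫ t in a..x, u t) + ∫ t in x..b, v t := by
  have hite := IntervalIntegrable.ite_lt hx hu hv
  rw [← integral_add_adjacent_intervals
      (hite.mono_set (uIcc_subset_uIcc_left (Icc_subset_uIcc hx)))
      (hite.mono_set (uIcc_subset_uIcc_right (Icc_subset_uIcc hx))),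
    integral_congr_Ioo_of_le hx.1 eqOn_ite_lt_left,
    integral_congr_Ioo_of_le hx.2 eqOn_ite_lt_right]

end Piecewise

theorem integral_sub_mul_deriv {f f' : ℝ → ℝ} {p q : ℝ} (c : ℝ)
    (hf : ∀ t ∈ uIcc p q, HasDerivAt f (f' t) t) (hf' : IntervalIntegrable f' volume p q) :
    ∫ t in p..q, (t - c) * f' t = (q - c) * f q - (p - c) * f p - ∫ t in p..q, f t := by
  simpa using integral_mul_deriv_eq_deriv_mul (fun t _ => (hasDerivAt_id t).sub_const c) hf
    intervalIntegrable_const hf'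

noncomputable def montgomeryKernel (a b x t : ℝ) : ℝ := if t < x then t - a else t - b

section MontgomeryKernel

variable {a b x : ℝ} {φ : ℝ → ℝ}

theorem IntervalIntegrable.montgomeryKernel_mul (hx : x ∈ Icc a b)
    (hφ : IntervalIntegrable φ volume a b) :
    IntervalIntegrable (fun t => montgomeryKernel a b x t * φ t) volume a b := by
  simp only [montgomeryKernel, ite_mul]
  exact .ite_lt hx (hφ.continuousOn_mul (continuous_sub_right a).continuousOn)
    (hφ.continuousOn_mul (continuous_sub_right b).continuousOn)

theorem integral_montgomeryKernel_mul (hx : x ∈ Icc a b)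
    (hφ : IntervalIntegrable φ volume a b) :
    ∫ t in a..b, montgomeryKernel a b x t * φ t
      = (∫ t in a..x, (t - a) * φ t) + ∫ t in x..b, (t - b) * φ t := by
  simp only [montgomeryKernel, ite_mul]
  exact integral_ite_lt hx (hφ.continuousOn_mul (continuous_sub_right a).continuousOn)
    (hφ.continuousOn_mul (continuous_sub_right b).continuousOn)

theorem integral_montgomeryKernel (hx : x ∈ Icc a b) :
    ∫ t in a..b, montgomeryKernel a b x t = (x - a) ^ 2 / 2 - (x - b) ^ 2 / 2 := by
  have hsplit := integral_montgomeryKernel_mul hx (φ := 1) intervalIntegrable_const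
  simp only [Pi.one_apply, mul_one] at hsplit
  rw [hsplit, integral_comp_sub_right (fun t => t), integral_comp_sub_right (fun t => t),
    integral_id, integral_id]
  ring

theorem integral_montgomeryKernel_mul_deriv {f f' : ℝ → ℝ} (hx : x ∈ Icc a b)
    (hf : ∀ t ∈ Icc a b, HasDerivAt f (f' t) t) (hf' : IntervalIntegrable f' volume a b) :
    ∫ t in a..b, montgomeryKernel a b x t * f' t = (b - a) * f x - ∫ t in a..b, f t := by
  rw [← uIcc_of_le (hx.1.trans hx.2)] at hf
  have hleft := uIcc_subset_uIcc_left (Icc_subset_uIcc hx)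
  have hright := uIcc_subset_uIcc_right (Icc_subset_uIcc hx)
  have hfi : IntervalIntegrable f volume a b :=
    ContinuousOn.intervalIntegrable fun t ht => (hf t ht).continuousAt.continuousWithinAt
  rw [integral_montgomeryKernel_mul hx hf',
    integral_sub_mul_deriv a (fun t ht => hf t (hleft ht)) (hf'.mono_set hleft),
    integral_sub_mul_deriv b (fun t ht => hf t (hright ht)) (hf'.mono_set hright),
    ← integral_add_adjacent_intervals (hfi.mono_set hleft) (hfi.mono_set hright)]
  ring

end MontgomeryKernel

theorem ostrowski_gruss_real
    (a b : ℝ) (hab : a < b) (f f' : ℝ → ℝ)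
    (hf : ∀ t ∈ Set.Icc a b, HasDerivAt f (f' t) t)
    (hf'c : ContinuousOn f' (Set.Icc a b))
    (K : ℝ → ℝ → ℝ)
    (hK : ∀ x, ∀ t, K t x = if t < x then t - a else t - b) :
    ∀ x ∈ Set.Icc a b,
      |f x - (1 / (b - a)) * (∫ t in a..b, f t)
          - (f b - f a) / (b - a) ^ 2 * ((x - a) ^ 2 / 2 - (x - b) ^ 2 / 2)|
        ≤ Real.sqrt ((1 / (b - a)) * (∫ t in a..b, (K t x) ^ 2)
              - ((1 / (b - a)) * ∫ t in a..b, K t x) ^ 2)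
          * Real.sqrt ((1 / (b - a)) * (∫ t in a..b, (f' t) ^ 2)
              - ((f b - f a) / (b - a)) ^ 2) := by
  intro x hx
  obtain rfl : K = fun t x => montgomeryKernel a b x t := funext₂ fun t x => hK x t
  rw [← uIcc_of_le hab.le] at hf'c
  have hf'i : IntervalIntegrable f' volume a b := hf'c.intervalIntegrable
  have hKi : IntervalIntegrable (montgomeryKernel a b x) volume a b := by
    simpa using IntervalIntegrable.montgomeryKernel_mul hx (φ := 1) intervalIntegrable_const
  have hK2i : IntervalIntegrable (fun t => montgomeryKernel a b x t ^ 2) volume a b := by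
    simpa only [sq] using hKi.montgomeryKernel_mul hx
  have hchebyshev := abs_chebyshev_functional_le hab hKi hf'i hK2i (hf'c.pow 2).intervalIntegrable
    (hf'i.montgomeryKernel_mul hx)
  beta_reduce
  rw [integral_montgomeryKernel_mul_deriv hx hf hf'i,
    integral_eq_sub_of_hasDerivAt (by rwa [uIcc_of_le hab.le]) hf'i] at hchebyshev
  rw [← integral_montgomeryKernel hx]
  have hlen : b - a ≠ 0 := (sub_pos.2 hab).ne'
  convert hchebyshev using 3 <;> field_simp
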